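/- arXiv:2312.13482 — 3 statements merged into one kernel-verified Lean document; each statement's English description precedes it below -/
import Mathlib

section
/- (MDR control theorem) Let h_1,...,h_n be {0,1}-valued random variables with observations z_1,...,z_n and posterior weights w_i = P(h_i=1 | z_i). Suppose Σ_{i=1}^n w_i > 0 almost surely and E[s] > 0 where s = Σ 1(h_i=1). Fix β > 0 and let δ* be the measurable rule that, given (z_1,...,z_n), selects the top-j* weights where j* = min{j : Σ_{i: w_i < w_(j)} w_i < β · Σ_{i=1}^n w_i} (with w_(j) the j-th largest weight). Then MDR_{δ*} := E[Σ_{i: δ*_i=0} 1(h_i=1)] / E[s] ≤ β. -/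
open MeasureTheory Finset


section Aux
open MeasureTheory
variable {Ω : Type*}

lemma aux_ind_int {mΩ : MeasurableSpace Ω} {μ : Measure Ω} {f : Ω → ℝ} {s : Set Ω}
    (hf : Integrable f μ) (hs : MeasurableSet s) : Integrable (s.indicator f) μ :=
  hf.indicator hs

lemma aux_int_ind {mΩ : MeasurableSpace Ω} {μ : Measure Ω} {f : Ω → ℝ} {s : Set Ω}
    (hs : MeasurableSet s) : ∫ x, s.indicator f x ∂μ = ∫ x in s, f x ∂μ :=
  integral_indicator hs

lemma aux_const_int {mΩ : MeasurableSpace Ω} (μ : Measure Ω) [IsProbabilityMeasure μ]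
    (c : ℝ) : Integrable (fun _ => c) μ := integrable_const c

lemma aux_sum_int {mΩ : MeasurableSpace Ω} {μ : Measure Ω} {ι : Type*} (t : Finset ι)
    (f : ι → Ω → ℝ) (hf : ∀ i ∈ t, Integrable (f i) μ) :
    ∫ x, (∑ i ∈ t, f i x) ∂μ = ∑ i ∈ t, ∫ x, f i x ∂μ :=
  integral_finset_sum t hf

lemma aux_int_sum {mΩ : MeasurableSpace Ω} {μ : Measure Ω} {ι : Type*} (t : Finset ι)
    (f : ι → Ω → ℝ) (hf : ∀ i ∈ t, Integrable (f i) μ) :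
    Integrable (fun x => ∑ i ∈ t, f i x) μ :=
  integrable_finset_sum t hf

lemma aux_mono {mΩ : MeasurableSpace Ω} {μ : Measure Ω} {f g : Ω → ℝ}
    (hf : Integrable f μ) (hg : Integrable g μ) (h : ∀ x, f x ≤ g x) :
    ∫ x, f x ∂μ ≤ ∫ x, g x ∂μ :=
  integral_mono hf hg h

lemma aux_mul {mΩ : MeasurableSpace Ω} {μ : Measure Ω} (f : Ω → ℝ) (c : ℝ) :
    ∫ x, c * f x ∂μ = c * ∫ x, f x ∂μ := integral_const_mul c f

lemma aux_const_mul {mΩ : MeasurableSpace Ω} {μ : Measure Ω} {f : Ω → ℝ}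
    (hf : Integrable f μ) (c : ℝ) : Integrable (fun x => c * f x) μ := hf.const_mul c

lemma aux_setcongr {mΩ : MeasurableSpace Ω} {μ : Measure Ω} {f g : Ω → ℝ} {s : Set Ω}
    (hs : MeasurableSet s) (h : ∀ᵐ x ∂μ, x ∈ s → f x = g x) :
    ∫ x in s, f x ∂μ = ∫ x in s, g x ∂μ :=
  setIntegral_congr_ae hs h

lemma aux_set {m0 : MeasurableSpace Ω} (μ : Measure Ω) [IsProbabilityMeasure μ]
    {m : MeasurableSpace Ω} (hm : m ≤ m0) {f g : Ω → ℝ} (hf : Integrable f μ)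
    (hfg : (μ[f|m]) =ᵐ[μ] g) {s : Set Ω} (hs : MeasurableSet[m] s) :
    ∫ ω in s, f ω ∂μ = ∫ ω in s, g ω ∂μ :=
  calc ∫ ω in s, f ω ∂μ = ∫ ω in s, (μ[f|m]) ω ∂μ := (setIntegral_condExp hm hf hs).symm
    _ = ∫ ω in s, g ω ∂μ := aux_setcongr (hm _ hs) (hfg.mono fun ω hw _ => hw)

lemma aux_tot {m0 : MeasurableSpace Ω} (μ : Measure Ω) [IsProbabilityMeasure μ]
    {m : MeasurableSpace Ω} (hm : m ≤ m0) {f g : Ω → ℝ} (hf : Integrable f μ)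
    (hfg : (μ[f|m]) =ᵐ[μ] g) : ∫ ω, f ω ∂μ = ∫ ω, g ω ∂μ :=
  calc ∫ ω, f ω ∂μ = ∫ ω, (μ[f|m]) ω ∂μ := (integral_condExp hm).symm
    _ = ∫ ω, g ω ∂μ := integral_congr_ae hfg

end Aux

/-- MDR control theorem: the Spatial MDR rule δ*, which selects the
minimal top-j* set of posterior weights with BMDR < β, satisfies MDR ≤ β. -/
theorem spatial_mdr_control
    {Ω : Type*} (m : MeasurableSpace Ω) [m0 : MeasurableSpace Ω] (μ : Measure Ω) [IsProbabilityMeasure μ]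
    (n : ℕ) (hm : m ≤ m0)
    (h : Fin n → Ω → Bool) (hmeas : ∀ i, Measurable (h i))
    (w : Fin n → Ω → ℝ) (hwint : ∀ i, Integrable (w i) μ)
    (hcond : ∀ i, (μ[(fun ω => if h i ω then (1:ℝ) else 0) | m]) =ᵐ[μ] w i)
    (hWpos : ∀ᵐ ω ∂μ, 0 < ∑ i, w i ω)
    (hEs : 0 < ∫ ω, (∑ i, if h i ω then (1:ℝ) else 0) ∂μ)
    (β : ℝ) (hβ : 0 < β)
    (σ : Ω → Equiv.Perm (Fin n))
    (hσ : ∀ ω, ∀ i j : Fin n, i ≤ j → w (σ ω j) ω ≤ w (σ ω i) ω)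
    (jstar : Ω → Fin n)
    (hjstar : ∀ ω, IsLeast {j : Fin n |
      (∑ i ∈ univ.filter (fun i => w i ω < w (σ ω j) ω), w i ω) <
        β * ∑ i, w i ω} (jstar ω))
    (δ : Fin n → Ω → Bool)
    (hδ : ∀ i ω, δ i ω = true ↔ w (σ ω (jstar ω)) ω ≤ w i ω)
    (hδmeas : ∀ i, Measurable[m] (δ i)) :
    (∫ ω, (∑ i ∈ univ.filter (fun i => δ i ω = false),
        if h i ω then (1:ℝ) else 0) ∂μ) /
      (∫ ω, (∑ i, if h i ω then (1:ℝ) else 0) ∂μ) ≤ β := by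
  classical
  set A : Fin n → Set Ω := fun i => {ω | δ i ω = false} with hAdef
  have hA : ∀ i, MeasurableSet[m] (A i) := fun i =>
    (hδmeas i) (measurableSet_singleton false)
  have hA0 : ∀ i, MeasurableSet[m0] (A i) := fun i => hm _ (hA i)
  have hhint : ∀ i, Integrable (fun ω => if h i ω then (1:ℝ) else 0) μ := by
    intro i
    have hs : MeasurableSet[m0] {ω | h i ω = true} :=
      (hmeas i) (measurableSet_singleton true)
    have : (fun ω => if h i ω then (1:ℝ) else 0)
        = Set.indicator {ω | h i ω = true} (fun _ => (1:ℝ)) := by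
      funext ω; simp [Set.indicator_apply]
    rw [this]
    exact aux_ind_int (aux_const_int μ 1) hs
  -- for each i : ∫_{A i} 1_h = ∫_{A i} w i
  have key : ∀ i, ∫ ω in A i, (if h i ω then (1:ℝ) else 0) ∂μ = ∫ ω in A i, w i ω ∂μ := by
    intro i
    exact aux_set μ hm (hhint i) (hcond i) (hA i)
  -- total : ∫ 1_h = ∫ w i
  have keyT : ∀ i, ∫ ω, (if h i ω then (1:ℝ) else 0) ∂μ = ∫ ω, w i ω ∂μ := by
    intro i
    exact aux_tot μ hm (hhint i) (hcond i)
  -- numerator rewrite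
  have hnum : (∫ ω, (∑ i ∈ univ.filter (fun i => δ i ω = false),
        if h i ω then (1:ℝ) else 0) ∂μ)
      = ∫ ω, (∑ i, (A i).indicator (w i) ω) ∂μ := by
    have h1 : (fun ω => ∑ i ∈ univ.filter (fun i => δ i ω = false),
        if h i ω then (1:ℝ) else 0)
        = fun ω => ∑ i, (A i).indicator (fun ω' => if h i ω' then (1:ℝ) else 0) ω := by
      funext ω
      rw [sum_filter]
      refine Finset.sum_congr rfl fun i _ => ?_
      by_cases hi : δ i ω = false <;> simp [Set.indicator_apply, hAdef, hi]
    rw [h1, aux_sum_int _ _ (fun i _ => aux_ind_int (hhint i) (hA0 i)),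
      aux_sum_int _ _ (fun i _ => aux_ind_int (hwint i) (hA0 i))]
    refine Finset.sum_congr rfl fun i _ => ?_
    rw [aux_int_ind (hA0 i), aux_int_ind (hA0 i)]
    exact key i
  rw [hnum]
  -- denominator rewrite
  have hden : (∫ ω, (∑ i, if h i ω then (1:ℝ) else 0) ∂μ) = ∫ ω, (∑ i, w i ω) ∂μ := by
    rw [aux_sum_int _ _ (fun i _ => hhint i), aux_sum_int _ _ (fun i _ => hwint i)]
    exact Finset.sum_congr rfl fun i _ => keyT i
  -- pointwise bound
  have hpt : ∀ ω, (∑ i, (A i).indicator (w i) ω) ≤ β * ∑ i, w i ω := by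
    intro ω
    have heq : (∑ i, (A i).indicator (w i) ω)
        = ∑ i ∈ univ.filter (fun i => w i ω < w (σ ω (jstar ω)) ω), w i ω := by
      rw [sum_filter]
      refine Finset.sum_congr rfl fun i _ => ?_
      have : δ i ω = false ↔ w i ω < w (σ ω (jstar ω)) ω := by
        rw [← not_le, ← hδ i ω]
        cases hb : δ i ω <;> simp
      by_cases hi : w i ω < w (σ ω (jstar ω)) ω <;>
        simp [Set.indicator_apply, hAdef, this, hi]
    rw [heq]
    exact le_of_lt (hjstar ω).1
  -- integrate the bound
  have hintN : Integrable (fun ω => ∑ i, (A i).indicator (w i) ω) μ :=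
    aux_int_sum _ _ (fun i _ => aux_ind_int (hwint i) (hA0 i))
  have hintD : Integrable (fun ω => ∑ i, w i ω) μ :=
    aux_int_sum _ _ (fun i _ => hwint i)
  have hle : (∫ ω, (∑ i, (A i).indicator (w i) ω) ∂μ)
      ≤ β * ∫ ω, (∑ i, w i ω) ∂μ := by
    rw [← aux_mul]
    exact aux_mono hintN (aux_const_mul hintD β) hpt
  rw [div_le_iff₀ hEs, hden]
  exact hle
end

section
/- If a measurable decision rule δ (a function of z_1,...,z_n) satisfies Σ_{i: δ_i=0} w_i < β · Σ_{i=1}^n w_i almost surely, where w_i = P(h_i=1|z_i), then E[FN_δ] ≤ β · E[s], where FN_δ = Σ_{i: δ_i=0} 1(h_i=1) and s = Σ_{i=1}^n 1(h_i=1). -/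
open MeasureTheory Finset

/-- if a measurable decision rule δ has BMDR < β almost surely, then
E[FN_δ] ≤ β · E[s]. -/
theorem bmdr_control_implies_expected_fn_bound
    {Ω : Type*} (m : MeasurableSpace Ω) [m0 : MeasurableSpace Ω] (μ : Measure Ω) [IsProbabilityMeasure μ]
    (n : ℕ) (hm : m ≤ m0)
    (h : Fin n → Ω → Bool) (hmeas : ∀ i, Measurable (h i))
    (w : Fin n → Ω → ℝ) (hwint : ∀ i, Integrable (w i) μ)
    (hcond : ∀ i, (μ[(fun ω => if h i ω then (1:ℝ) else 0) | m]) =ᵐ[μ] w i)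
    (δ : Fin n → Ω → Bool) (hδmeas : ∀ i, Measurable[m] (δ i))
    (β : ℝ)
    (hδ : ∀ᵐ ω ∂μ, (∑ i ∈ univ.filter (fun i => δ i ω = false), w i ω) <
        β * ∑ i, w i ω) :
    (∫ ω, (∑ i ∈ univ.filter (fun i => δ i ω = false),
        if h i ω then (1:ℝ) else 0) ∂μ) ≤
      β * ∫ ω, (∑ i, if h i ω then (1:ℝ) else 0) ∂μ := by
  classical
  letI : MeasurableSpace Ω := m0
  set f : Fin n → Ω → ℝ := fun i ω => if h i ω then 1 else 0 with hfdef
  have hSmeas : ∀ i, MeasurableSet[m] {ω | δ i ω = false} := fun i =>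
    (hδmeas i) (measurableSet_singleton false)
  have hSmeas0 : ∀ i, MeasurableSet[m0] {ω | δ i ω = false} := fun i => hm _ (hSmeas i)
  have hfint : ∀ i, Integrable (f i) μ := by
    intro i
    have hfi : f i = Set.indicator {ω | h i ω = true} (fun _ => (1:ℝ)) := by
      funext ω; simp [hfdef, Set.indicator_apply]
    rw [hfi]
    exact (integrable_const 1).indicator ((hmeas i) (measurableSet_singleton true))
  have h1 : ∀ (g : Fin n → Ω → ℝ) (ω : Ω),
      (∑ i ∈ univ.filter (fun i => δ i ω = false), g i ω)
        = ∑ i, Set.indicator {ω' | δ i ω' = false} (g i) ω := by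
    intro g ω
    rw [sum_filter]
    refine Finset.sum_congr rfl fun i _ => ?_
    simp [Set.indicator_apply]
  have hint_eq : ∀ (g : Fin n → Ω → ℝ), (∀ i, Integrable (g i) μ) →
      (∫ ω, (∑ i ∈ univ.filter (fun i => δ i ω = false), g i ω) ∂μ)
        = ∑ i, ∫ ω in {ω | δ i ω = false}, g i ω ∂μ := by
    intro g hg
    simp_rw [h1 g]
    rw [integral_finset_sum _ fun i _ => (hg i).indicator (hSmeas0 i)]
    exact Finset.sum_congr rfl fun i _ => integral_indicator (hSmeas0 i)
  have key : ∀ i, ∫ ω in {ω | δ i ω = false}, f i ω ∂μ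
      = ∫ ω in {ω | δ i ω = false}, w i ω ∂μ := fun i => by
    rw [← setIntegral_condExp hm (hfint i) (hSmeas i)]
    exact setIntegral_congr_ae (hSmeas0 i) ((hcond i).mono fun ω hω _ => hω)
  have hwfilt_int : Integrable
      (fun ω => ∑ i ∈ univ.filter (fun i => δ i ω = false), w i ω) μ := by
    refine (integrable_finset_sum univ fun i _ => (hwint i).indicator (hSmeas0 i)).congr ?_
    exact Filter.Eventually.of_forall fun ω => (h1 w ω).symm
  have step2 : (∫ ω, (∑ i ∈ univ.filter (fun i => δ i ω = false), w i ω) ∂μ)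
      ≤ ∫ ω, β * ∑ i, w i ω ∂μ := by
    refine integral_mono_ae hwfilt_int
      ((integrable_finset_sum univ fun i _ => hwint i).const_mul β)
      (hδ.mono fun ω hω => le_of_lt hω)
  have hwf : ∀ i, ∫ ω, w i ω ∂μ = ∫ ω, f i ω ∂μ := fun i => by
    rw [← integral_congr_ae (hcond i), integral_condExp hm]
  show (∫ ω, (∑ i ∈ univ.filter (fun i => δ i ω = false), f i ω) ∂μ)
      ≤ β * ∫ ω, (∑ i, f i ω) ∂μ
  calc (∫ ω, (∑ i ∈ univ.filter (fun i => δ i ω = false), f i ω) ∂μ)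
      = ∑ i, ∫ ω in {ω | δ i ω = false}, f i ω ∂μ := hint_eq f hfint
    _ = ∑ i, ∫ ω in {ω | δ i ω = false}, w i ω ∂μ :=
        Finset.sum_congr rfl fun i _ => key i
    _ = ∫ ω, (∑ i ∈ univ.filter (fun i => δ i ω = false), w i ω) ∂μ :=
        (hint_eq w hwint).symm
    _ ≤ ∫ ω, β * ∑ i, w i ω ∂μ := step2
    _ = β * ∫ ω, (∑ i, w i ω) ∂μ := integral_const_mul β _
    _ = β * ∑ i, ∫ ω, w i ω ∂μ := by
        rw [integral_finset_sum _ fun i _ => hwint i]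
    _ = β * ∑ i, ∫ ω, f i ω ∂μ := by
        rw [Finset.sum_congr rfl fun i _ => hwf i]
    _ = β * ∫ ω, (∑ i, f i ω) ∂μ := by
        rw [integral_finset_sum _ fun i _ => hfint i]
end

section
/- Let FN and FP be nonnegative integer random variables (false negatives and false positives of a rule), s the number of signals with E[s] > 0. If the rule δ has BMDR_δ < β almost surely with respect to posterior weights w_i = P(h_i=1|z_i), then MDR_δ = E[FN_δ]/E[s] < β provided P(Σ_i w_i > 0) = 1; in particular the bound in Theorem 1 can be made strict under the almost-sure strict inequality. -/
open MeasureTheory Finset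

/-- strict version of the MDR control theorem: if BMDR_δ < β almost surely
(with Σ_i w_i > 0 a.s. and E[Σ_i w_i] > 0), then MDR_δ = E[FN_δ]/E[s] < β. -/
theorem strict_bmdr_control_implies_strict_mdr
    {Ω : Type*} (m : MeasurableSpace Ω) [m0 : MeasurableSpace Ω] (μ : Measure Ω) [IsProbabilityMeasure μ]
    (n : ℕ) (hm : m ≤ m0)
    (h : Fin n → Ω → Bool) (hmeas : ∀ i, Measurable (h i))
    (w : Fin n → Ω → ℝ) (hwint : ∀ i, Integrable (w i) μ)
    (hcond : ∀ i, (μ[(fun ω => if h i ω then (1:ℝ) else 0) | m]) =ᵐ[μ] w i)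
    (hWpos : ∀ᵐ ω ∂μ, 0 < ∑ i, w i ω)
    (hEW : 0 < ∫ ω, (∑ i, w i ω) ∂μ)
    (hEs : 0 < ∫ ω, (∑ i, if h i ω then (1:ℝ) else 0) ∂μ)
    (δ : Fin n → Ω → Bool) (hδmeas : ∀ i, Measurable[m] (δ i))
    (β : ℝ)
    (hδ : ∀ᵐ ω ∂μ, (∑ i ∈ univ.filter (fun i => δ i ω = false), w i ω) <
        β * ∑ i, w i ω) :
    (∫ ω, (∑ i ∈ univ.filter (fun i => δ i ω = false),
        if h i ω then (1:ℝ) else 0) ∂μ) /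
      (∫ ω, (∑ i, if h i ω then (1:ℝ) else 0) ∂μ) < β := by
  letI : MeasurableSpace Ω := m0
  have hsig : SigmaFinite (μ.trim hm) := by
    have : IsFiniteMeasure (μ.trim hm) := isFiniteMeasure_trim hm
    infer_instance
  -- the indicator sets
  set s : Fin n → Set Ω := fun i => {ω | δ i ω = false} with hs
  have hsm : ∀ i, MeasurableSet[m] (s i) := fun i =>
    (hδmeas i) (measurableSet_singleton false)
  have hsm0 : ∀ i, MeasurableSet[m0] (s i) := fun i => hm _ (hsm i)
  -- integrability facts
  have hind_meas : ∀ i, Measurable (fun ω => if h i ω then (1:ℝ) else 0) := fun i =>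
    Measurable.ite ((hmeas i) (measurableSet_singleton true)) measurable_const measurable_const
  have hind_int : ∀ i, Integrable (fun ω => if h i ω then (1:ℝ) else 0) μ := by
    intro i
    have ham : AEStronglyMeasurable (fun ω => if h i ω then (1:ℝ) else 0) μ :=
      Measurable.aestronglyMeasurable (hind_meas i)
    refine (integrable_const (1:ℝ)).mono' ham ?_
    refine Filter.Eventually.of_forall fun ω => ?_
    by_cases hb : h i ω <;> simp [hb]
  -- rewrite the filtered sums as sums of indicators
  have hsum1 : ∀ ω, (∑ i ∈ univ.filter (fun i => δ i ω = false),
      if h i ω then (1:ℝ) else 0)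
      = ∑ i, (s i).indicator (fun ω => if h i ω then (1:ℝ) else 0) ω := by
    intro ω
    rw [Finset.sum_filter]
    refine Finset.sum_congr rfl fun i _ => ?_
    by_cases hb : δ i ω = false <;> simp [Set.indicator, hs, hb]
  have hsum2 : ∀ ω, (∑ i ∈ univ.filter (fun i => δ i ω = false), w i ω)
      = ∑ i, (s i).indicator (w i) ω := by
    intro ω
    rw [Finset.sum_filter]
    refine Finset.sum_congr rfl fun i _ => ?_
    by_cases hb : δ i ω = false <;> simp [Set.indicator, hs, hb]
  -- key identity: E[FN] = E[∑_{δ=0} w]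
  have hterm : ∀ i, ∫ ω, (s i).indicator (fun ω => if h i ω then (1:ℝ) else 0) ω ∂μ
      = ∫ ω, (s i).indicator (w i) ω ∂μ := by
    intro i
    rw [integral_indicator (μ := μ) (hsm0 i), integral_indicator (μ := μ) (hsm0 i)]
    rw [← setIntegral_condExp hm (hind_int i) (hsm i)]
    exact setIntegral_congr_ae (μ := μ) (hsm0 i) ((hcond i).mono fun ω hω _ => hω)
  -- integrability of the sums
  have hFint : Integrable (fun ω => ∑ i, (s i).indicator (w i) ω) μ :=
    integrable_finset_sum _ fun i _ => (hwint i).indicator (hsm0 i)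
  have hFNint : Integrable (fun ω => ∑ i, (s i).indicator
      (fun ω => if h i ω then (1:ℝ) else 0) ω) μ :=
    integrable_finset_sum _ fun i _ => (hind_int i).indicator (hsm0 i)
  have hWint : Integrable (fun ω => ∑ i, w i ω) μ :=
    integrable_finset_sum _ fun i _ => hwint i
  -- numerator equals ∫ F
  have hnum : (∫ ω, (∑ i ∈ univ.filter (fun i => δ i ω = false),
      if h i ω then (1:ℝ) else 0) ∂μ) = ∫ ω, (∑ i, (s i).indicator (w i) ω) ∂μ := by
    rw [integral_congr_ae (Filter.Eventually.of_forall hsum1)]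
    rw [integral_finset_sum _ fun i _ => (hind_int i).indicator (hsm0 i)]
    rw [integral_finset_sum _ fun i _ => (hwint i).indicator (hsm0 i)]
    exact Finset.sum_congr rfl fun i _ => hterm i
  -- denominator equals ∫ Σ w
  have hden : (∫ ω, (∑ i, if h i ω then (1:ℝ) else 0) ∂μ)
      = ∫ ω, (∑ i, w i ω) ∂μ := by
    rw [integral_finset_sum _ fun i _ => hind_int i,
      integral_finset_sum _ fun i _ => hwint i]
    refine Finset.sum_congr rfl fun i _ => ?_
    rw [← integral_condExp hm (f := fun ω => if h i ω then (1:ℝ) else 0) (μ := μ)]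
    exact integral_congr_ae (hcond i)
  -- strict inequality of integrals
  set g : Ω → ℝ := fun ω => β * (∑ i, w i ω) - ∑ i, (s i).indicator (w i) ω with hg
  have hgint : Integrable g μ := (hWint.const_mul β).sub hFint
  have hgpos : ∀ᵐ ω ∂μ, 0 < g ω := hδ.mono fun ω hω => by
    simp only [hg, sub_pos]
    rw [← hsum2 ω]
    exact hω
  have hgI : 0 < ∫ ω, g ω ∂μ := by
    rw [integral_pos_iff_support_of_nonneg_ae (μ := μ)
      (hgpos.mono fun ω hω => hω.le) hgint, pos_iff_ne_zero]
    intro h0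
    have hz : ∀ᵐ ω ∂μ, g ω = 0 := by
      rw [ae_iff]
      simpa [Function.support] using h0
    obtain ⟨ω, h1, h2⟩ := (hgpos.and hz).exists
    exact absurd h2 h1.ne'
  have hlt : (∫ ω, (∑ i, (s i).indicator (w i) ω) ∂μ)
      < β * ∫ ω, (∑ i, w i ω) ∂μ := by
    have := hgI
    rw [hg, integral_sub (hWint.const_mul β) hFint, MeasureTheory.integral_const_mul] at this
    linarith
  rw [hnum, hden, div_lt_iff₀ hEW]
  exact hlt
end
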